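/- Let K be an algebraically closed field of characteristic different from 2, let φ ∈ K be a primitive m-th root of unity, let m₁,…,m_n be natural numbers such that (φ; m₁,…,m_n) is generic, let g ≥ 1, and set ξ = diag(φ^{m₁},…,φ^{m_n}, φ^{−m₁},…,φ^{−m_n}) ∈ Sp(2n,K). Let μ₂^n denote the group of diagonal matrices diag(ε₁,…,ε_n,ε₁,…,ε_n) with all ε_i ∈ {1,−1}, and let H be a subgroup of μ₂^n with −I_{2n} ∈ H and |H| = 2^{k+1}. Then there exist pairwise disjoint (possibly empty) subsets Π₁,…,Π_{2^k} of {1,…,n} whose union is {1,…,n} such that the set U_{n,H} = {(A₁,B₁,…,A_g,B_g) ∈ Sp(2n,K)^{2g} : ∏_{i=1}^{g}[A_i:B_i] = ξ and every A_i and every B_i commutes with every element of H} is in bijection with the product ∏_{i=1}^{2^k} U_{|Π_i|}^{Π_i(ξ)}. -/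

import Mathlib

/-!
Every `ε ∈ H` is diagonal, so a matrix commutes with all of them iff it is block diagonal for the
partition of the indices into the classes `Π` on which every `ε ∈ H` is constant (applied to both
halves `Fin n ⊕ Fin n`; `2 ≠ 0` makes the signs `±1` distinct in `K`). Transposes, products,
inverses of symplectic matrices, `J` and the diagonal matrix `ξ` all split block by block, so the
tuple `(Aᵢ, Bᵢ)` lies in `U_{n,H}` iff each of its blocks lies in `U_{|Π|}^{Π(ξ)}`.

There are at most `2^k` classes: the characters `ε ↦ ε_s` of the elementary abelian group `H`
separate the classes and all send `-1` to `-1`; multiplying by one of them maps them injectively to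
characters sending `-1` to `1`, and `H` has exactly `|H| = 2^(k+1)` characters.
-/

open Matrix

/-- The standard symplectic structure matrix `J = [[0, I_n], [−I_n, 0]]`. -/
def sympJ (n : ℕ) (K : Type*) [Field K] :
    Matrix (Fin n ⊕ Fin n) (Fin n ⊕ Fin n) K :=
  Matrix.fromBlocks 0 1 (-1) 0

/-- `A` belongs to `Sp(2n, K)`, i.e. `Aᵀ J A = J`. -/
def IsSymplectic {n : ℕ} {K : Type*} [Field K]
    (A : Matrix (Fin n ⊕ Fin n) (Fin n ⊕ Fin n) K) : Prop :=
  Aᵀ * sympJ n K * A = sympJ n K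

/-- `(φ; m₁, …, m_n)` is generic. -/
def Generic {K : Type*} [Field K] (φ : K) {n : ℕ} (m : Fin n → ℕ) : Prop :=
  (∀ J L : Finset (Fin n), Disjoint J L → (J.Nonempty ∨ L.Nonempty) →
    ∏ j ∈ J, φ ^ m j ≠ ∏ l ∈ L, φ ^ m l) ∧
  ∀ i, φ ^ (2 * m i) ≠ 1

/-- The matrix `diag²(ε₁,…,ε_a) = diag(ε₁,…,ε_a,ε₁,…,ε_a)` associated to a sign vector. -/
def sgnMatrix {a : ℕ} (K : Type*) [Field K] (ε : Fin a → ℤˣ) :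
    Matrix (Fin a ⊕ Fin a) (Fin a ⊕ Fin a) K :=
  Matrix.diagonal (Sum.elim (fun i => ((ε i : ℤ) : K)) (fun i => ((ε i : ℤ) : K)))

/-- The variety `U_a^{ξ}` of `2g`-tuples of symplectic matrices with
`∏ᵢ [Aᵢ : Bᵢ] = diag(d₁,…,d_a,d₁⁻¹,…,d_a⁻¹)`. -/
def USet (K : Type*) [Field K] (g a : ℕ) (d : Fin a → K) :
    Set ((Fin g → Matrix (Fin a ⊕ Fin a) (Fin a ⊕ Fin a) K) ×
      (Fin g → Matrix (Fin a ⊕ Fin a) (Fin a ⊕ Fin a) K)) :=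
  {AB | (∀ i, IsSymplectic (AB.1 i)) ∧ (∀ i, IsSymplectic (AB.2 i)) ∧
    (List.ofFn (fun i => AB.1 i * AB.2 i * (AB.1 i)⁻¹ * (AB.2 i)⁻¹)).prod =
      Matrix.diagonal (Sum.elim d fun j => (d j)⁻¹)}

section SignCharacter

variable {ι : Type*} (H : Subgroup (ι → ℤˣ))

/-- Valued in `ℂˣ` so that the count of characters of a finite abelian group applies. -/
def signCharacter (s : ι) : H →* ℂˣ :=
  (Units.map (Int.castRingHom ℂ : ℤ →* ℂ)).comp ((Pi.evalMonoidHom (fun _ => ℤˣ) s).comp H.subtype)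

lemma signCharacter_apply (s : ι) (ε : H) :
    (signCharacter H s ε : ℂ) = ((ε : ι → ℤˣ) s : ℤ) := rfl

lemma signCharacter_eq_iff (s t : ι) :
    signCharacter H s = signCharacter H t ↔ ∀ ε ∈ H, ε s = ε t := by
  simp only [DFunLike.ext_iff, Units.ext_iff, signCharacter_apply, Int.cast_inj, Subtype.forall]

lemma two_mul_card_range_signCharacter_le [Finite H] (hneg : -1 ∈ H) :
    2 * Nat.card (Set.range (signCharacter H)) ≤ Nat.card H := by
  rcases isEmpty_or_nonempty ι with _ | ⟨⟨s₀⟩⟩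
  · simp [Set.range_eq_empty (signCharacter H)]
  have : NeZero (Monoid.exponent H : ℂ) := ⟨Nat.cast_ne_zero.mpr Monoid.exponent_ne_zero_of_finite⟩
  have hχ : ∀ χ ∈ Set.range (signCharacter H), χ ⟨-1, hneg⟩ = -1 := by
    rintro _ ⟨s, rfl⟩
    ext
    simp [signCharacter_apply]
  have hinj : Function.Injective (Sum.elim (fun χ : Set.range (signCharacter H) => (χ : H →* ℂˣ))
      (fun χ : Set.range (signCharacter H) => (χ : H →* ℂˣ) * signCharacter H s₀)) := by
    have hne : (-1 : ℂˣ) ≠ -1 * -1 := by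
      rw [neg_one_mul, neg_neg]
      exact neg_units_ne_self 1
    rintro (χ | χ) (ψ | ψ) h <;>
      simp only [Sum.elim_inl, Sum.elim_inr, Sum.inl.injEq, Sum.inr.injEq, reduceCtorEq] at h ⊢
    · exact Subtype.ext h
    · have := DFunLike.congr_fun h ⟨-1, hneg⟩
      rw [MonoidHom.mul_apply, hχ _ χ.2, hχ _ ψ.2, hχ _ ⟨s₀, rfl⟩] at this
      exact hne this
    · have := DFunLike.congr_fun h ⟨-1, hneg⟩
      rw [MonoidHom.mul_apply, hχ _ χ.2, hχ _ ψ.2, hχ _ ⟨s₀, rfl⟩] at this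
      exact hne this.symm
    · exact Subtype.ext (mul_right_cancel h)
  have := Nat.card_le_card_of_injective _ hinj
  rwa [Nat.card_sum, CommGroup.card_monoidHom_of_hasEnoughRootsOfUnity, ← two_mul] at this

lemma exists_classes_of_card_eq (hneg : -1 ∈ H) {k : ℕ} (hcard : Nat.card H = 2 ^ (k + 1)) :
    ∃ c : ι → Fin (2 ^ k), ∀ s t, c s = c t ↔ ∀ ε ∈ H, ε s = ε t := by
  have : Finite H := Nat.finite_of_card_ne_zero (by rw [hcard]; positivity)
  have := Fintype.ofFinite (Set.range (signCharacter H))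
  have hle : Fintype.card (Set.range (signCharacter H)) ≤ Fintype.card (Fin (2 ^ k)) := by
    have := two_mul_card_range_signCharacter_le H hneg
    rw [hcard, pow_succ, Nat.card_eq_fintype_card] at this
    rw [Fintype.card_fin]
    omega
  obtain ⟨e⟩ := Function.Embedding.nonempty_of_card_le hle
  refine ⟨fun s => e ⟨signCharacter H s, Set.mem_range_self s⟩, fun s t => ?_⟩
  rw [e.apply_eq_iff_eq, Subtype.mk.injEq, signCharacter_eq_iff]

end SignCharacter

namespace Matrix

lemma mul_diagonal_eq_diagonal_mul_iff {R : Type*} [CommRing R] [NoZeroDivisors R]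
    {ι : Type*} [Fintype ι] [DecidableEq ι] (A : Matrix ι ι R) (d : ι → R) :
    A * diagonal d = diagonal d * A ↔ ∀ x y, d x ≠ d y → A x y = 0 := by
  simp only [← Matrix.ext_iff, mul_diagonal, diagonal_mul]
  refine forall₂_congr fun x y => ⟨fun h hxy => ?_, fun h => ?_⟩
  · have : A x y * (d y - d x) = 0 := by rw [mul_sub, h, mul_comm, sub_self]
    exact (mul_eq_zero.mp this).resolve_right (sub_ne_zero.mpr (Ne.symm hxy))
  · by_cases hxy : d x = d y
    · rw [hxy, mul_comm]
    · rw [h hxy, mul_zero, zero_mul]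

noncomputable def commutatorProduct {R : Type*} [CommRing R] {ι : Type*} [Fintype ι]
    [DecidableEq ι] {g : ℕ} (A B : Fin g → Matrix ι ι R) : Matrix ι ι R :=
  (List.ofFn fun t => A t * B t * (A t)⁻¹ * (B t)⁻¹).prod

section ReindexedBlockDiagonal

variable {R : Type*} [CommRing R] {o : Type*} [Fintype o] [DecidableEq o] {m : o → Type*}
  [∀ i, Fintype (m i)] [∀ i, DecidableEq (m i)] {ι : Type*} [Fintype ι] [DecidableEq ι]
  (e : (Σ i, m i) ≃ ι)

def reindexedBlockDiagonal : (∀ i, Matrix (m i) (m i) R) →+* Matrix ι ι R :=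
  (reindexRingEquiv R e).toRingHom.comp (blockDiagonal'RingHom m R)

lemma reindexedBlockDiagonal_apply (M : ∀ i, Matrix (m i) (m i) R) (p q : Σ i, m i) :
    reindexedBlockDiagonal e M (e p) (e q) = blockDiagonal' M p q := by
  simp [reindexedBlockDiagonal]

def blockAt (A : Matrix ι ι R) (i : o) : Matrix (m i) (m i) R :=
  A.submatrix (fun u => e ⟨i, u⟩) (fun u => e ⟨i, u⟩)

def IsBlockDiagonalAlong (A : Matrix ι ι R) : Prop :=
  ∀ p q : Σ i, m i, p.1 ≠ q.1 → A (e p) (e q) = 0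

@[simp]
lemma blockAt_reindexedBlockDiagonal (M : ∀ i, Matrix (m i) (m i) R) :
    blockAt e (reindexedBlockDiagonal e M) = M := by
  ext i u v
  simp [blockAt, reindexedBlockDiagonal_apply]

lemma reindexedBlockDiagonal_injective :
    Function.Injective (reindexedBlockDiagonal (R := R) e) :=
  Function.LeftInverse.injective (blockAt_reindexedBlockDiagonal e)

lemma isBlockDiagonalAlong_reindexedBlockDiagonal (M : ∀ i, Matrix (m i) (m i) R) :
    IsBlockDiagonalAlong e (reindexedBlockDiagonal e M) := fun p q hpq => by
  rw [reindexedBlockDiagonal_apply, blockDiagonal'_apply, dif_neg hpq]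

lemma reindexedBlockDiagonal_blockAt {A : Matrix ι ι R} (hA : IsBlockDiagonalAlong e A) :
    reindexedBlockDiagonal e (blockAt e A) = A := by
  ext x y
  obtain ⟨⟨i, u⟩, rfl⟩ := e.surjective x
  obtain ⟨⟨j, v⟩, rfl⟩ := e.surjective y
  rw [reindexedBlockDiagonal_apply]
  by_cases hij : i = j
  · subst hij
    simp [blockAt]
  · rw [blockDiagonal'_apply_ne _ _ _ hij, hA _ _ hij]

lemma reindexedBlockDiagonal_transpose (M : ∀ i, Matrix (m i) (m i) R) :
    reindexedBlockDiagonal e (fun i => (M i)ᵀ) = (reindexedBlockDiagonal e M)ᵀ := by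
  simp [reindexedBlockDiagonal]

lemma reindexedBlockDiagonal_inv (M : ∀ i, Matrix (m i) (m i) R) (hM : ∀ i, IsUnit (M i).det) :
    (reindexedBlockDiagonal e M)⁻¹ = reindexedBlockDiagonal e (fun i => (M i)⁻¹) := by
  refine inv_eq_left_inv ?_
  rw [← map_mul, ← map_one (reindexedBlockDiagonal e)]
  exact congrArg _ (funext fun i => nonsing_inv_mul _ (hM i))

lemma diagonal_eq_reindexedBlockDiagonal (d : ι → R) :
    diagonal d = reindexedBlockDiagonal e (fun i => diagonal fun u => d (e ⟨i, u⟩)) := by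
  have hd : IsBlockDiagonalAlong e (diagonal d) := fun p q hpq =>
    diagonal_apply_ne _ (e.injective.ne fun h => hpq (congrArg Sigma.fst h))
  rw [← reindexedBlockDiagonal_blockAt e hd]
  congr 1
  ext i : 1
  exact submatrix_diagonal _ _ (e.injective.comp sigma_mk_injective)

lemma reindexedBlockDiagonal_commutatorProduct {g : ℕ} (MA MB : Fin g → ∀ i, Matrix (m i) (m i) R)
    (hA : ∀ t i, IsUnit (MA t i).det) (hB : ∀ t i, IsUnit (MB t i).det) :
    commutatorProduct (fun t => reindexedBlockDiagonal e (MA t))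
        (fun t => reindexedBlockDiagonal e (MB t)) =
      reindexedBlockDiagonal e
        (fun i => commutatorProduct (fun t => MA t i) (fun t => MB t i)) := by
  have hcomm : ∀ t, reindexedBlockDiagonal e (MA t) * reindexedBlockDiagonal e (MB t) *
      (reindexedBlockDiagonal e (MA t))⁻¹ * (reindexedBlockDiagonal e (MB t))⁻¹ =
      reindexedBlockDiagonal e (MA t * MB t * (MA t)⁻¹ * (MB t)⁻¹) := fun t => by
    rw [reindexedBlockDiagonal_inv e _ (hA t), reindexedBlockDiagonal_inv e _ (hB t)]
    simp only [map_mul]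
    rfl
  calc commutatorProduct (fun t => reindexedBlockDiagonal e (MA t))
        (fun t => reindexedBlockDiagonal e (MB t))
      = (List.ofFn fun t => reindexedBlockDiagonal e (MA t * MB t * (MA t)⁻¹ * (MB t)⁻¹)).prod :=
        congrArg List.prod (List.ofFn_inj.mpr (funext hcomm))
    _ = _ := by
      rw [← Function.comp_def (reindexedBlockDiagonal e), ← List.map_ofFn, ← map_list_prod]
      congr 1
      ext i : 1
      rw [Pi.list_prod_apply, List.map_ofFn]
      rfl

end ReindexedBlockDiagonal

end Matrix

section Symplectic

variable {K : Type*} [Field K]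

lemma sympJ_mul_sympJ (a : ℕ) : sympJ a K * sympJ a K = -1 := by
  simp [sympJ, fromBlocks_multiply, ← fromBlocks_one, fromBlocks_neg]

lemma IsSymplectic.isUnit_det {a : ℕ} {A : Matrix (Fin a ⊕ Fin a) (Fin a ⊕ Fin a) K}
    (hA : IsSymplectic A) : IsUnit A.det := by
  refine isUnit_det_of_left_inverse (B := -sympJ a K * Aᵀ * sympJ a K) ?_
  rw [Matrix.mul_assoc, Matrix.mul_assoc, ← Matrix.mul_assoc Aᵀ, hA, neg_mul, sympJ_mul_sympJ,
    neg_neg]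

lemma sympJ_submatrix_sumMap {a b : ℕ} {f : Fin a → Fin b} (hf : Function.Injective f) :
    (sympJ b K).submatrix (Sum.map f f) (Sum.map f f) = sympJ a K := by
  ext (u | u) (v | v) <;> simp [sympJ, one_apply, hf.eq_iff]

end Symplectic

section SignedIndex

variable {n N : ℕ} (c : Fin n → Fin N)

abbrev fiber (i : Fin N) : Finset (Fin n) := {s | c s = i}

def fiberIndexEquiv : (Σ i, Fin (fiber c i).card) ≃ Fin n :=
  (Equiv.sigmaCongrRight fun i => ((fiber c i).orderIsoOfFin rfl).toEquiv.trans
    (Equiv.subtypeEquivRight (by simp))).trans (Equiv.sigmaFiberEquiv c)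

def signedIndexEquiv : (Σ i, Fin (fiber c i).card ⊕ Fin (fiber c i).card) ≃ Fin n ⊕ Fin n :=
  (Equiv.sigmaSumDistrib _ _).trans (Equiv.sumCongr (fiberIndexEquiv c) (fiberIndexEquiv c))

@[simp]
lemma signedIndexEquiv_inl (i : Fin N) (u : Fin (fiber c i).card) :
    signedIndexEquiv c ⟨i, .inl u⟩ = .inl ((fiber c i).orderEmbOfFin rfl u) := rfl

@[simp]
lemma signedIndexEquiv_inr (i : Fin N) (u : Fin (fiber c i).card) :
    signedIndexEquiv c ⟨i, .inr u⟩ = .inr ((fiber c i).orderEmbOfFin rfl u) := rfl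

lemma signedIndexEquiv_mk (i : Fin N) :
    (fun u => signedIndexEquiv c ⟨i, u⟩) =
      Sum.map ((fiber c i).orderEmbOfFin rfl) ((fiber c i).orderEmbOfFin rfl) := by
  ext (u | u) <;> rfl

lemma fiber_signedIndexEquiv (p : Σ i, Fin (fiber c i).card ⊕ Fin (fiber c i).card) :
    c (Sum.elim id id (signedIndexEquiv c p)) = p.1 := by
  obtain ⟨i, u | u⟩ := p <;>
    exact (Finset.mem_filter.mp ((fiber c i).orderEmbOfFin_mem rfl u)).2

end SignedIndex

section BlockDecomposition

variable {K : Type*} [Field K] {n N : ℕ} (c : Fin n → Fin N)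

lemma isBlockDiagonalAlong_signedIndexEquiv_iff (A : Matrix (Fin n ⊕ Fin n) (Fin n ⊕ Fin n) K) :
    IsBlockDiagonalAlong (signedIndexEquiv c) A ↔
      ∀ x y, c (Sum.elim id id x) ≠ c (Sum.elim id id y) → A x y = 0 := by
  refine ⟨fun hA x y hxy => ?_, fun hA p q hpq => hA _ _ ?_⟩
  · obtain ⟨p, rfl⟩ := (signedIndexEquiv c).surjective x
    obtain ⟨q, rfl⟩ := (signedIndexEquiv c).surjective y
    rw [fiber_signedIndexEquiv c, fiber_signedIndexEquiv c] at hxy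
    exact hA p q hxy
  · rwa [fiber_signedIndexEquiv c, fiber_signedIndexEquiv c]

lemma sympJ_eq_reindexedBlockDiagonal :
    sympJ n K =
      reindexedBlockDiagonal (signedIndexEquiv c) (fun i => sympJ (fiber c i).card K) := by
  have hJ : IsBlockDiagonalAlong (signedIndexEquiv c) (sympJ n K) := by
    rw [isBlockDiagonalAlong_signedIndexEquiv_iff]
    rintro (s | s) (t | t) hst <;>
      simp [sympJ, one_apply, show s ≠ t from fun h => hst (by subst h; rfl)]
  rw [← reindexedBlockDiagonal_blockAt _ hJ]
  congr 1
  ext i : 1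
  rw [blockAt, signedIndexEquiv_mk]
  exact sympJ_submatrix_sumMap ((fiber c i).orderEmbOfFin rfl).injective

lemma isSymplectic_reindexedBlockDiagonal_iff
    (M : ∀ i, Matrix (Fin (fiber c i).card ⊕ Fin (fiber c i).card)
      (Fin (fiber c i).card ⊕ Fin (fiber c i).card) K) :
    IsSymplectic (reindexedBlockDiagonal (signedIndexEquiv c) M) ↔ ∀ i, IsSymplectic (M i) := by
  rw [IsSymplectic, ← reindexedBlockDiagonal_transpose, sympJ_eq_reindexedBlockDiagonal c,
    ← map_mul, ← map_mul, (reindexedBlockDiagonal_injective _).eq_iff, funext_iff]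
  rfl

lemma diagonal_eq_reindexedBlockDiagonal_signedIndexEquiv (d : Fin n → K) :
    diagonal (Sum.elim d fun j => (d j)⁻¹) =
      reindexedBlockDiagonal (signedIndexEquiv c) fun i =>
        diagonal (Sum.elim (fun j => d ((fiber c i).orderEmbOfFin rfl j))
          fun j => (d ((fiber c i).orderEmbOfFin rfl j))⁻¹) := by
  rw [diagonal_eq_reindexedBlockDiagonal (signedIndexEquiv c)]
  congr
  ext i : 1
  congr 1
  ext (u | u) <;> rfl

lemma mem_USet_iff {g a : ℕ} (d : Fin a → K)
    (AB : (Fin g → Matrix (Fin a ⊕ Fin a) (Fin a ⊕ Fin a) K) ×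
      (Fin g → Matrix (Fin a ⊕ Fin a) (Fin a ⊕ Fin a) K)) :
    AB ∈ USet K g a d ↔ (∀ t, IsSymplectic (AB.1 t)) ∧ (∀ t, IsSymplectic (AB.2 t)) ∧
      commutatorProduct AB.1 AB.2 = diagonal (Sum.elim d fun j => (d j)⁻¹) :=
  Iff.rfl

lemma mem_USet_reindexedBlockDiagonal_iff {g : ℕ} (d : Fin n → K)
    (MA MB : Fin g → ∀ i, Matrix (Fin (fiber c i).card ⊕ Fin (fiber c i).card)
      (Fin (fiber c i).card ⊕ Fin (fiber c i).card) K) :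
    ((fun t => reindexedBlockDiagonal (signedIndexEquiv c) (MA t)),
        (fun t => reindexedBlockDiagonal (signedIndexEquiv c) (MB t))) ∈ USet K g n d ↔
      ∀ i, ((fun t => MA t i), (fun t => MB t i)) ∈
        USet K g (fiber c i).card (fun j => d ((fiber c i).orderEmbOfFin rfl j)) := by
  simp only [mem_USet_iff, isSymplectic_reindexedBlockDiagonal_iff]
  constructor
  · rintro ⟨hA, hB, hprod⟩ i
    rw [reindexedBlockDiagonal_commutatorProduct _ _ _ (fun t i => (hA t i).isUnit_det)
      (fun t i => (hB t i).isUnit_det), diagonal_eq_reindexedBlockDiagonal_signedIndexEquiv,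
      (reindexedBlockDiagonal_injective _).eq_iff] at hprod
    exact ⟨fun t => hA t i, fun t => hB t i, congrFun hprod i⟩
  · intro h
    have hA : ∀ t i, IsSymplectic (MA t i) := fun t i => (h i).1 t
    have hB : ∀ t i, IsSymplectic (MB t i) := fun t i => (h i).2.1 t
    refine ⟨hA, hB, ?_⟩
    rw [reindexedBlockDiagonal_commutatorProduct _ _ _ (fun t i => (hA t i).isUnit_det)
      (fun t i => (hB t i).isUnit_det), diagonal_eq_reindexedBlockDiagonal_signedIndexEquiv]
    exact congrArg _ (funext fun i => (h i).2.2)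

end BlockDecomposition

section SignCommutant

variable {K : Type*} [Field K]

lemma intCast_units_inj (h2 : (2 : K) ≠ 0) {u v : ℤˣ} : ((u : ℤ) : K) = ((v : ℤ) : K) ↔ u = v := by
  refine ⟨fun h => ?_, fun h => h ▸ rfl⟩
  have hne : (1 : K) ≠ -1 := fun h' => h2 (by linear_combination h')
  rcases Int.units_eq_one_or u with rfl | rfl <;> rcases Int.units_eq_one_or v with rfl | rfl <;>
    simp_all [eq_comm]

lemma sgnMatrix_eq_diagonal {n : ℕ} (ε : Fin n → ℤˣ) :
    sgnMatrix K ε = diagonal fun x => ((ε (Sum.elim id id x) : ℤ) : K) := by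
  rw [sgnMatrix]
  congr 1
  ext (s | s) <;> rfl

lemma forall_commute_sgnMatrix_iff (h2 : (2 : K) ≠ 0) {n N : ℕ} {H : Subgroup (Fin n → ℤˣ)}
    {c : Fin n → Fin N} (hc : ∀ s t, c s = c t ↔ ∀ ε ∈ H, ε s = ε t)
    (A : Matrix (Fin n ⊕ Fin n) (Fin n ⊕ Fin n) K) :
    (∀ ε ∈ H, A * sgnMatrix K ε = sgnMatrix K ε * A) ↔
      IsBlockDiagonalAlong (signedIndexEquiv c) A := by
  simp only [isBlockDiagonalAlong_signedIndexEquiv_iff, sgnMatrix_eq_diagonal,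
    mul_diagonal_eq_diagonal_mul_iff, ne_eq, intCast_units_inj h2, hc]
  push Not
  exact ⟨fun h x y ⟨ε, hε, hne⟩ => h ε hε x y hne, fun h ε hε x y hne => h x y ⟨ε, hε, hne⟩⟩

end SignCommutant

/-- The set `U_{n,H}`. -/
def USetCommuting (K : Type*) [Field K] (g : ℕ) {n : ℕ} (H : Subgroup (Fin n → ℤˣ))
    (d : Fin n → K) :
    Set ((Fin g → Matrix (Fin n ⊕ Fin n) (Fin n ⊕ Fin n) K) ×
      (Fin g → Matrix (Fin n ⊕ Fin n) (Fin n ⊕ Fin n) K)) :=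
  {AB | ∀ ε ∈ H, ∀ i, AB.1 i * sgnMatrix K ε = sgnMatrix K ε * AB.1 i ∧
    AB.2 i * sgnMatrix K ε = sgnMatrix K ε * AB.2 i} ∩ USet K g n d

namespace USetCommuting

variable {K : Type*} [Field K] {g n N : ℕ} {H : Subgroup (Fin n → ℤˣ)} {c : Fin n → Fin N}
  (d : Fin n → K)

lemma reindexedBlockDiagonal_blockAt_of_mem (h2 : (2 : K) ≠ 0)
    (hc : ∀ s t, c s = c t ↔ ∀ ε ∈ H, ε s = ε t)
    {AB : (Fin g → Matrix (Fin n ⊕ Fin n) (Fin n ⊕ Fin n) K) ×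
      (Fin g → Matrix (Fin n ⊕ Fin n) (Fin n ⊕ Fin n) K)} (hAB : AB ∈ USetCommuting K g H d) :
    ((fun t => reindexedBlockDiagonal (signedIndexEquiv c) (blockAt (signedIndexEquiv c) (AB.1 t))),
      (fun t => reindexedBlockDiagonal (signedIndexEquiv c) (blockAt (signedIndexEquiv c) (AB.2 t))))
      = AB := by
  have hbd := fun A hA => (forall_commute_sgnMatrix_iff h2 hc A).mp hA
  exact Prod.ext
    (funext fun t => reindexedBlockDiagonal_blockAt _ (hbd _ fun ε hε => (hAB.1 ε hε t).1))
    (funext fun t => reindexedBlockDiagonal_blockAt _ (hbd _ fun ε hε => (hAB.1 ε hε t).2))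

lemma reindexedBlockDiagonal_mem_iff (h2 : (2 : K) ≠ 0)
    (hc : ∀ s t, c s = c t ↔ ∀ ε ∈ H, ε s = ε t)
    (MA MB : Fin g → ∀ i, Matrix (Fin (fiber c i).card ⊕ Fin (fiber c i).card)
      (Fin (fiber c i).card ⊕ Fin (fiber c i).card) K) :
    ((fun t => reindexedBlockDiagonal (signedIndexEquiv c) (MA t)),
        (fun t => reindexedBlockDiagonal (signedIndexEquiv c) (MB t))) ∈ USetCommuting K g H d ↔
      ∀ i, ((fun t => MA t i), (fun t => MB t i)) ∈
        USet K g (fiber c i).card (fun j => d ((fiber c i).orderEmbOfFin rfl j)) := by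
  have hcomm := fun M => (forall_commute_sgnMatrix_iff h2 hc _).mpr
    (isBlockDiagonalAlong_reindexedBlockDiagonal (signedIndexEquiv c) M)
  rw [USetCommuting, Set.mem_inter_iff, mem_USet_reindexedBlockDiagonal_iff]
  exact and_iff_right fun ε hε t => ⟨hcomm _ ε hε, hcomm _ ε hε⟩

noncomputable def blockEquiv (h2 : (2 : K) ≠ 0) (hc : ∀ s t, c s = c t ↔ ∀ ε ∈ H, ε s = ε t) :
    USetCommuting K g H d ≃
      ∀ i, USet K g (fiber c i).card (fun j => d ((fiber c i).orderEmbOfFin rfl j)) where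
  toFun AB i := ⟨(fun t => blockAt (signedIndexEquiv c) (AB.1.1 t) i,
      fun t => blockAt (signedIndexEquiv c) (AB.1.2 t) i), by
    refine (reindexedBlockDiagonal_mem_iff d h2 hc _ _).mp ?_ i
    rw [reindexedBlockDiagonal_blockAt_of_mem d h2 hc AB.2]
    exact AB.2⟩
  invFun y := ⟨(fun t => reindexedBlockDiagonal (signedIndexEquiv c) fun i => (y i).1.1 t,
      fun t => reindexedBlockDiagonal (signedIndexEquiv c) fun i => (y i).1.2 t),
    (reindexedBlockDiagonal_mem_iff d h2 hc _ _).mpr fun i => (y i).2⟩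
  left_inv AB := Subtype.ext (reindexedBlockDiagonal_blockAt_of_mem d h2 hc AB.2)
  right_inv y := funext fun i => Subtype.ext <| by simp

end USetCommuting

theorem statement2_general {K : Type*} [Field K] (h2 : (2 : K) ≠ 0)
    {φ : K}
    {n : ℕ} (mm : Fin n → ℕ)
    {g : ℕ}
    (H : Subgroup (Fin n → ℤˣ)) (hHneg : (fun _ => -1 : Fin n → ℤˣ) ∈ H)
    (k : ℕ) (hHcard : Nat.card H = 2 ^ (k + 1)) :
    ∃ Pcal : Fin (2 ^ k) → Finset (Fin n),
      (∀ i j, i ≠ j → Disjoint (Pcal i) (Pcal j)) ∧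
      (∀ s : Fin n, ∃ i, s ∈ Pcal i) ∧
      Nonempty
        ((({AB | (∀ ε ∈ H, ∀ i,
              AB.1 i * sgnMatrix K ε = sgnMatrix K ε * AB.1 i ∧
              AB.2 i * sgnMatrix K ε = sgnMatrix K ε * AB.2 i)} :
            Set ((Fin g → Matrix (Fin n ⊕ Fin n) (Fin n ⊕ Fin n) K) ×
              (Fin g → Matrix (Fin n ⊕ Fin n) (Fin n ⊕ Fin n) K))) ∩
          USet K g n (fun i => φ ^ mm i) : Set _) ≃
        ∀ i : Fin (2 ^ k),
          (USet K g (Pcal i).card (fun j => φ ^ mm ((Pcal i).orderEmbOfFin rfl j)))) := by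
  obtain ⟨c, hc⟩ := exists_classes_of_card_eq H hHneg hHcard
  refine ⟨fiber c, fun i j hij => ?_, fun s => ⟨c s, by simp⟩,
    ⟨USetCommuting.blockEquiv _ h2 hc⟩⟩
  exact Finset.disjoint_filter.mpr fun s _ hi hj => hij (hi.symm.trans hj)

theorem statement2 {K : Type*} [Field K] [IsAlgClosed K] (h2 : (2 : K) ≠ 0)
    {m : ℕ} {φ : K} (hφ : IsPrimitiveRoot φ m)
    {n : ℕ} (mm : Fin n → ℕ) (hgen : Generic φ mm)
    {g : ℕ} (hg : 1 ≤ g)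
    (H : Subgroup (Fin n → ℤˣ)) (hHneg : (fun _ => -1 : Fin n → ℤˣ) ∈ H)
    (k : ℕ) (hHcard : Nat.card H = 2 ^ (k + 1)) :
    ∃ Pcal : Fin (2 ^ k) → Finset (Fin n),
      (∀ i j, i ≠ j → Disjoint (Pcal i) (Pcal j)) ∧
      (∀ s : Fin n, ∃ i, s ∈ Pcal i) ∧
      Nonempty
        ((({AB | (∀ ε ∈ H, ∀ i,
              AB.1 i * sgnMatrix K ε = sgnMatrix K ε * AB.1 i ∧
              AB.2 i * sgnMatrix K ε = sgnMatrix K ε * AB.2 i)} :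
            Set ((Fin g → Matrix (Fin n ⊕ Fin n) (Fin n ⊕ Fin n) K) ×
              (Fin g → Matrix (Fin n ⊕ Fin n) (Fin n ⊕ Fin n) K))) ∩
          USet K g n (fun i => φ ^ mm i) : Set _) ≃
        ∀ i : Fin (2 ^ k),
          (USet K g (Pcal i).card (fun j => φ ^ mm ((Pcal i).orderEmbOfFin rfl j)))) :=
  statement2_general h2 mm H hHneg k hHcard
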